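/- arXiv:2510.19431 — 2 statements merged into one kernel-verified Lean document; each statement's English description precedes it below -/
import Mathlib

section
/- If x : ν → ℝ^d satisfies Δ_{η,κ,α} x = 0, where (Δx)_i = −Σ_j (κ_{ij}/Z_i)(α_{ij} x_j − x_i), then x_i = α_{ij} x_j for every edge i ∼ j with κ_{ij} > 0. -/
/-!
Pairing the kernel equation at `i` with `x i` and summing over `i` gives, by the symmetry of `κ`
and the orthogonality of the `α i j`, the gauged Dirichlet energy
`∑ i, ∑ j, κ i j ‖x i - α i j x j‖²` up to a factor `-2`. So this energy vanishes, and since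
each of its terms is nonnegative, every term with `κ i j > 0` forces `x i = α i j x j`.
-/

open Matrix

/-- The gauged Laplacian `(Δ x)_i = −Σ_j (κ_{ij}/Z_i)(α_{ij} x_j − x_i)`,
with `Z_i = Σ_j κ_{ij}`. -/
noncomputable def gaugedLap {ν : Type*} [Fintype ν] (d : ℕ)
    (κ : ν → ν → ℝ) (α : ν → ν → Matrix (Fin d) (Fin d) ℝ)
    (x : ν → Fin d → ℝ) : ν → Fin d → ℝ :=
  fun i => -∑ j, (κ i j / ∑ k, κ i k) • ((α i j).mulVec (x j) - x i)

open Finset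

theorem mulVec_dotProduct_mulVec_self_of_mul_transpose_eq_one {n R : Type*} [Fintype n]
    [DecidableEq n] [CommRing R] {A : Matrix n n R} (hA : A * Aᵀ = 1) (v : n → R) :
    A *ᵥ v ⬝ᵥ A *ᵥ v = v ⬝ᵥ v := by
  rw [dotProduct_mulVec, ← vecMul_transpose, vecMul_vecMul, mul_eq_one_comm.mp hA, vecMul_one]

section GaugedEnergy

variable {ν n R : Type*} [Fintype ν] [Fintype n] [CommRing R]

def gaugedEnergy (κ : ν → ν → R) (α : ν → ν → Matrix n n R) (x : ν → n → R) : R :=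
  ∑ i, ∑ j, κ i j * ((x i - α i j *ᵥ x j) ⬝ᵥ (x i - α i j *ᵥ x j))

theorem gaugedEnergy_eq [DecidableEq n] {κ : ν → ν → R} (hκ : ∀ i j, κ i j = κ j i)
    {α : ν → ν → Matrix n n R} (hα : ∀ i j, α i j * (α i j)ᵀ = 1) (x : ν → n → R) :
    gaugedEnergy κ α x = -2 * ∑ i, (∑ j, κ i j • (α i j *ᵥ x j - x i)) ⬝ᵥ x i := by
  have hterm : ∀ i j, κ i j * ((x i - α i j *ᵥ x j) ⬝ᵥ (x i - α i j *ᵥ x j)) =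
      κ i j * (x j ⬝ᵥ x j) - κ i j * (x i ⬝ᵥ x i)
        - 2 * (κ i j * ((α i j *ᵥ x j - x i) ⬝ᵥ x i)) := by
    intro i j
    simp only [sub_dotProduct, dotProduct_sub,
      mulVec_dotProduct_mulVec_self_of_mul_transpose_eq_one (hα i j),
      dotProduct_comm (α i j *ᵥ x j) (x i)]
    ring
  have hswap : ∑ i, ∑ j, κ i j * (x j ⬝ᵥ x j) = ∑ i, ∑ j, κ i j * (x i ⬝ᵥ x i) := by
    rw [sum_comm]
    simp only [hκ]
  simp only [gaugedEnergy, hterm, sum_sub_distrib, hswap, sub_self, zero_sub, ← mul_sum,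
    sum_dotProduct, smul_dotProduct, smul_eq_mul]
  ring

variable [LinearOrder R] [IsStrictOrderedRing R]

theorem eq_mulVec_of_gaugedEnergy_eq_zero {κ : ν → ν → R} (hκ : ∀ i j, 0 ≤ κ i j)
    {α : ν → ν → Matrix n n R} {x : ν → n → R} (hE : gaugedEnergy κ α x = 0) {i j : ν}
    (hij : 0 < κ i j) : x i = α i j *ᵥ x j := by
  have hnonneg : ∀ i j, 0 ≤ κ i j * ((x i - α i j *ᵥ x j) ⬝ᵥ (x i - α i j *ᵥ x j)) :=
    fun i j => mul_nonneg (hκ i j) (sum_nonneg fun _ _ => mul_self_nonneg _)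
  have hrow := (sum_eq_zero_iff_of_nonneg fun i _ => sum_nonneg fun j _ => hnonneg i j).mp hE i
    (mem_univ i)
  have hterm := (sum_eq_zero_iff_of_nonneg fun j _ => hnonneg i j).mp hrow j (mem_univ j)
  rw [mul_eq_zero, or_iff_right hij.ne', dotProduct_self_eq_zero, sub_eq_zero] at hterm
  exact hterm

end GaugedEnergy

theorem sum_smul_eq_zero_of_gaugedLap_eq_zero {ν : Type*} [Fintype ν] {d : ℕ}
    {κ : ν → ν → ℝ} (hZ : ∀ i, 0 < ∑ j, κ i j) {α : ν → ν → Matrix (Fin d) (Fin d) ℝ}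
    {x : ν → Fin d → ℝ} (hker : gaugedLap d κ α x = 0) (i : ν) :
    ∑ j, κ i j • (α i j *ᵥ x j - x i) = 0 := by
  have hi : ∑ j, (∑ k, κ i k)⁻¹ • κ i j • (α i j *ᵥ x j - x i) = 0 := by
    simpa only [gaugedLap, Pi.zero_apply, neg_eq_zero, div_eq_inv_mul, mul_smul] using congrFun hker i
  rwa [← smul_sum, smul_eq_zero, or_iff_right (inv_ne_zero (hZ i).ne')] at hi

theorem stmt7_general {ν : Type*} [Fintype ν] (d : ℕ)
    (κ : ν → ν → ℝ)
    (hκsym : ∀ i j, κ i j = κ j i)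
    (hκnn : ∀ i j, 0 ≤ κ i j)
    (hZ : ∀ i, 0 < ∑ j, κ i j)
    (α : ν → ν → Matrix (Fin d) (Fin d) ℝ)
    (hortho : ∀ i j, α i j * (α i j)ᵀ = 1)
    (x : ν → Fin d → ℝ)
    (hker : gaugedLap d κ α x = 0) :
    ∀ i j, 0 < κ i j → x i = (α i j).mulVec (x j) := by
  have hE : gaugedEnergy κ α x = 0 := by
    simp only [gaugedEnergy_eq hκsym hortho, sum_smul_eq_zero_of_gaugedLap_eq_zero hZ hker,
      zero_dotProduct, sum_const_zero, mul_zero]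
  exact fun i j hij => eq_mulVec_of_gaugedEnergy_eq_zero hκnn hE hij

/-- If `Δ_{η,κ,α} x = 0` then `x_i = α_{ij} x_j` on every edge
(`κ_{ij} > 0`). -/
theorem stmt7 {ν : Type*} [Fintype ν] (d : ℕ)
    (κ : ν → ν → ℝ)
    (hκsym : ∀ i j, κ i j = κ j i)
    (hκnn : ∀ i j, 0 ≤ κ i j)
    (hZ : ∀ i, 0 < ∑ j, κ i j)
    (α : ν → ν → Matrix (Fin d) (Fin d) ℝ)
    (hortho : ∀ i j, α i j * (α i j)ᵀ = 1)
    (hdet : ∀ i j, (α i j).det = 1)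
    (hinv : ∀ i j, α j i = (α i j)ᵀ)
    (x : ν → Fin d → ℝ)
    (hker : gaugedLap d κ α x = 0) :
    ∀ i j, 0 < κ i j → x i = (α i j).mulVec (x j) :=
  stmt7_general d κ hκsym hκnn hZ α hortho x hker
end

section
/- For a finite connected graph η with SO(d)-voltage α, the voltage α is synchronizable (i.e., there exist ξ_i ∈ SO(d) with α_{ij} = ξ_i ξ_j⁻¹ on all edges) if and only if dim ker Δ_{η,κ,α} = d for any (equivalently, some) positive symmetric edge weights κ. -/
open Matrix

/-- The gauged Laplacian `(Δ x)_i = −Σ_j (κ_{ij}/Z_i)(α_{ij} x_j − x_i)`,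
with `Z_i = Σ_j κ_{ij}`, as a linear operator on `ν → ℝ^d`. -/
noncomputable def gaugedLapL {ν : Type*} [Fintype ν] (d : ℕ)
    (κ : ν → ν → ℝ) (α : ν → ν → Matrix (Fin d) (Fin d) ℝ) :
    (ν → Fin d → ℝ) →ₗ[ℝ] (ν → Fin d → ℝ) where
  toFun x := fun i => -∑ j, (κ i j / ∑ k, κ i k) • ((α i j).mulVec (x j) - x i)
  map_add' x y := by
    funext i
    simp only [Pi.add_apply, Matrix.mulVec_add]
    rw [← neg_add, ← Finset.sum_add_distrib]
    congr 1
    refine Finset.sum_congr rfl fun j _ => ?_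
    rw [← smul_add]
    congr 1
    abel
  map_smul' c x := by
    funext i
    simp only [Pi.smul_apply, RingHom.id_apply]
    rw [smul_neg, Finset.smul_sum]
    congr 1
    refine Finset.sum_congr rfl fun j _ => ?_
    rw [Matrix.mulVec_smul, ← smul_sub, smul_comm]

/-! Pairing `Δx` with `x`, the symmetry of `κ` and the orthogonality of `α` turn the Dirichlet
energy `∑ κᵢⱼ ‖αᵢⱼ xⱼ - xᵢ‖²` into `2 ∑ Zᵢ ⟨xᵢ, (Δx)ᵢ⟩`, so the kernel of `Δ` consists exactly of
the parallel sections, `αᵢⱼ xⱼ = xᵢ` on every edge. On a connected graph such a section is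
determined by its value at a base vertex `i₀`, so the kernel has dimension at most `d`, with
equality iff every value at `i₀` extends, i.e. iff there is a matrix frame `ξ` with `ξ i₀ = 1` and
`αᵢⱼ ξⱼ = ξᵢ` on edges. Propagating from `i₀`, such a frame is `SO(d)`-valued and is a
synchronization; conversely a synchronization `ξ`, normalised to `ξᵢ ξᵢ₀⁻¹`, is such a frame.
-/

namespace SimpleGraph

variable {V : Type*} {G : SimpleGraph V}

theorem Preconnected.forall_of_forall_adj {p : V → Prop} (hG : G.Preconnected)
    (hp : ∀ u v, G.Adj u v → p u → p v) {u : V} (hu : p u) (v : V) : p v := by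
  obtain ⟨w⟩ := hG u v
  induction w with
  | nil => exact hu
  | cons h _ ih => exact ih (hp _ _ h hu)

end SimpleGraph

section ParallelSections

variable {ν n K : Type*} [Fintype n] [Field K] {G : SimpleGraph ν} {α : ν → ν → Matrix n n K}

variable (G α) in
def parallelSections : Submodule K (ν → n → K) where
  carrier := {x | ∀ i j, G.Adj i j → α i j *ᵥ x j = x i}
  add_mem' hx hy i j h := by simp [mulVec_add, hx i j h, hy i j h]
  zero_mem' := by simp
  smul_mem' c x hx i j h := by simp [mulVec_smul, hx i j h]

theorem mem_parallelSections {x : ν → n → K} :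
    x ∈ parallelSections G α ↔ ∀ i j, G.Adj i j → α i j *ᵥ x j = x i :=
  Iff.rfl

theorem eq_zero_of_mem_parallelSections (hG : G.Preconnected) {x : ν → n → K}
    (hx : x ∈ parallelSections G α) {i₀ : ν} (h₀ : x i₀ = 0) : x = 0 :=
  funext <| hG.forall_of_forall_adj (p := fun i => x i = 0)
    (fun u v huv hu => by rw [← hx v u huv.symm, hu, mulVec_zero]) h₀

variable (G α) in
def evalParallelSection (i₀ : ν) : parallelSections G α →ₗ[K] n → K :=
  (LinearMap.proj i₀).comp (parallelSections G α).subtype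

theorem evalParallelSection_injective (hG : G.Preconnected) (i₀ : ν) :
    Function.Injective (evalParallelSection G α i₀) :=
  (injective_iff_map_eq_zero _).mpr fun x hx =>
    Subtype.ext (eq_zero_of_mem_parallelSections hG x.2 hx)

theorem finrank_parallelSections_eq_card_iff (hG : G.Preconnected) (i₀ : ν) :
    Module.finrank K (parallelSections G α) = Fintype.card n ↔
      Function.Surjective (evalParallelSection G α i₀) := by
  have hinj := evalParallelSection_injective (α := α) hG i₀
  have := FiniteDimensional.of_injective _ hinj
  rw [← Module.finrank_fintype_fun_eq_card K]
  refine ⟨fun h => (LinearMap.injective_iff_surjective_of_finrank_eq_finrank h).mp hinj,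
    fun hsurj => (LinearEquiv.ofBijective _ ⟨hinj, hsurj⟩).finrank_eq⟩

theorem evalParallelSection_surjective_iff [DecidableEq n] (i₀ : ν) :
    Function.Surjective (evalParallelSection G α i₀) ↔
      ∃ ξ : ν → Matrix n n K, ξ i₀ = 1 ∧ ∀ i j, G.Adj i j → α i j * ξ j = ξ i := by
  constructor
  · intro hsurj
    obtain ⟨s, hs⟩ := (evalParallelSection G α i₀).exists_rightInverse_of_surjective
      (LinearMap.range_eq_top.mpr hsurj)
    let ξ i :=
      LinearMap.toMatrix' ((LinearMap.proj i).comp ((parallelSections G α).subtype.comp s))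
    have hξ : ∀ i v, ξ i *ᵥ v = (s v : ν → n → K) i := fun i v =>
      LinearMap.toMatrix'_mulVec _ v
    refine ⟨ξ, ?_, fun i j hij => ext_iff_mulVec.mpr fun v => ?_⟩
    · rw [← LinearMap.toMatrix'_id, ← hs]
      rfl
    · rw [← mulVec_mulVec, hξ, hξ]
      exact (s v).2 i j hij
  · rintro ⟨ξ, hξ₀, hξ⟩ v
    refine ⟨⟨fun i => ξ i *ᵥ v, fun i j hij => ?_⟩, ?_⟩
    · rw [mulVec_mulVec, hξ i j hij]
    · show ξ i₀ *ᵥ v = v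
      rw [hξ₀, one_mulVec]

end ParallelSections

section Synchronization

variable {ν n R : Type*} [Fintype n] [DecidableEq n] [CommRing R] {G : SimpleGraph ν}
  {α : ν → ν → Matrix n n R}

theorem exists_synchronization_iff_exists_frame (hG : G.Preconnected)
    (hα : ∀ i j, α i j ∈ specialOrthogonalGroup n R) (i₀ : ν) :
    (∃ ξ : ν → Matrix n n R, (∀ i, ξ i ∈ specialOrthogonalGroup n R) ∧
        ∀ i j, G.Adj i j → α i j = ξ i * (ξ j)⁻¹) ↔
      ∃ ξ : ν → Matrix n n R, ξ i₀ = 1 ∧ ∀ i j, G.Adj i j → α i j * ξ j = ξ i := by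
  have isUnit_det {A : Matrix n n R} (hA : A ∈ specialOrthogonalGroup n R) : IsUnit A.det :=
    (mem_specialOrthogonalGroup_iff.mp hA).2 ▸ isUnit_one
  constructor
  · rintro ⟨ξ, hξ, hsync⟩
    refine ⟨fun i => ξ i * (ξ i₀)⁻¹, mul_nonsing_inv _ (isUnit_det (hξ i₀)), fun i j hij => ?_⟩
    rw [hsync i j hij, ← Matrix.mul_assoc,
      Matrix.nonsing_inv_mul_cancel_right _ _ (isUnit_det (hξ j))]
  · rintro ⟨ξ, hξ₀, hξ⟩
    have hSO : ∀ i, ξ i ∈ specialOrthogonalGroup n R :=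
      hG.forall_of_forall_adj (p := fun i => ξ i ∈ specialOrthogonalGroup n R)
        (fun u v huv hu => hξ v u huv.symm ▸ Submonoid.mul_mem _ (hα v u) hu)
        (hξ₀ ▸ Submonoid.one_mem _)
    refine ⟨ξ, hSO, fun i j hij => ?_⟩
    rw [← hξ i j hij, Matrix.mul_nonsing_inv_cancel_right _ _ (isUnit_det (hSO j))]

end Synchronization

section GaugedLaplacian

variable {ν : Type*} [Fintype ν] {d : ℕ} {κ : ν → ν → ℝ} {α : ν → ν → Matrix (Fin d) (Fin d) ℝ}

theorem gaugedLapL_apply (x : ν → Fin d → ℝ) (i : ν) :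
    gaugedLapL d κ α x i = -((∑ k, κ i k)⁻¹ • ∑ j, κ i j • (α i j *ᵥ x j - x i)) := by
  simp only [gaugedLapL, LinearMap.coe_mk, AddHom.coe_mk, Finset.smul_sum, smul_smul,
    div_eq_inv_mul]

theorem gaugedLapL_eq_zero_iff (hκ : ∀ i j, 0 ≤ κ i j) {x : ν → Fin d → ℝ} :
    gaugedLapL d κ α x = 0 ↔ ∀ i, ∑ j, κ i j • (α i j *ᵥ x j - x i) = 0 := by
  refine funext_iff.trans (forall_congr' fun i => ?_)
  rw [Pi.zero_apply, gaugedLapL_apply, neg_eq_zero, smul_eq_zero, inv_eq_zero]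
  -- `Zᵢ⁻¹ = 0` when `Zᵢ = 0`, but then every `κ i j` vanishes as well
  refine or_iff_right_of_imp fun hZ => ?_
  rw [Finset.sum_eq_zero_iff_of_nonneg fun j _ => hκ i j] at hZ
  simp [hZ]

theorem sum_sum_mul_dotProduct_self_eq (hsym : ∀ i j, κ i j = κ j i)
    (hα : ∀ i j, α i j * (α i j)ᵀ = 1) (x : ν → Fin d → ℝ) :
    ∑ i, ∑ j, κ i j * ((α i j *ᵥ x j - x i) ⬝ᵥ (α i j *ᵥ x j - x i)) =
      -2 * ∑ i, x i ⬝ᵥ ∑ j, κ i j • (α i j *ᵥ x j - x i) := by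
  have hnorm : ∀ i j, α i j *ᵥ x j ⬝ᵥ α i j *ᵥ x j = x j ⬝ᵥ x j := fun i j => by
    rw [dotProduct_mulVec, ← vecMul_transpose, vecMul_vecMul, mul_eq_one_comm.mp (hα i j),
      vecMul_one]
  have hswap : ∑ i, ∑ j, κ i j * (x j ⬝ᵥ x j) = ∑ i, ∑ j, κ i j * (x i ⬝ᵥ x i) := by
    rw [Finset.sum_comm]
    exact Finset.sum_congr rfl fun i _ => Finset.sum_congr rfl fun j _ => by rw [hsym]
  calc ∑ i, ∑ j, κ i j * ((α i j *ᵥ x j - x i) ⬝ᵥ (α i j *ᵥ x j - x i))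
      = ∑ i, ∑ j, (κ i j * (x j ⬝ᵥ x j) - κ i j * (x i ⬝ᵥ x i)
          - 2 * (x i ⬝ᵥ κ i j • (α i j *ᵥ x j - x i))) := by
        refine Finset.sum_congr rfl fun i _ => Finset.sum_congr rfl fun j _ => ?_
        simp only [sub_dotProduct, dotProduct_sub, dotProduct_smul, hnorm, smul_eq_mul,
          dotProduct_comm (α i j *ᵥ x j) (x i)]
        ring
    _ = -2 * ∑ i, x i ⬝ᵥ ∑ j, κ i j • (α i j *ᵥ x j - x i) := by
        simp only [Finset.sum_sub_distrib, hswap, sub_self, zero_sub, dotProduct_sum,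
          Finset.mul_sum, ← Finset.sum_neg_distrib, neg_mul]

theorem forall_sum_smul_eq_zero_iff (hsym : ∀ i j, κ i j = κ j i) (hκ : ∀ i j, 0 ≤ κ i j)
    (hα : ∀ i j, α i j * (α i j)ᵀ = 1) {x : ν → Fin d → ℝ} :
    (∀ i, ∑ j, κ i j • (α i j *ᵥ x j - x i) = 0) ↔
      ∀ i j, 0 < κ i j → α i j *ᵥ x j = x i := by
  constructor
  · intro h i j hij
    have hterm_nonneg : ∀ i j, 0 ≤ κ i j * ((α i j *ᵥ x j - x i) ⬝ᵥ (α i j *ᵥ x j - x i)) :=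
      fun i j => mul_nonneg (hκ i j) (dotProduct_self_star_nonneg _)
    have henergy := sum_sum_mul_dotProduct_self_eq hsym hα x
    simp only [h, dotProduct_zero, Finset.sum_const_zero, mul_zero] at henergy
    rw [Finset.sum_eq_zero_iff_of_nonneg fun i _ => Finset.sum_nonneg fun j _ =>
      hterm_nonneg i j] at henergy
    have hterm := (Finset.sum_eq_zero_iff_of_nonneg fun j _ => hterm_nonneg i j).mp
      (henergy i (Finset.mem_univ i)) j (Finset.mem_univ j)
    rw [mul_eq_zero, or_iff_right hij.ne', dotProduct_self_eq_zero, sub_eq_zero] at hterm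
    exact hterm
  · intro h i
    refine Finset.sum_eq_zero fun j _ => ?_
    rcases (hκ i j).eq_or_lt with h0 | hpos
    · rw [← h0, zero_smul]
    · rw [h i j hpos, sub_self, smul_zero]

theorem ker_gaugedLapL (G : SimpleGraph ν) (hsym : ∀ i j, κ i j = κ j i)
    (hκ : ∀ i j, 0 ≤ κ i j) (hsupp : ∀ i j, 0 < κ i j ↔ G.Adj i j)
    (hα : ∀ i j, α i j * (α i j)ᵀ = 1) :
    LinearMap.ker (gaugedLapL d κ α) = parallelSections G α := by
  ext x
  rw [LinearMap.mem_ker, gaugedLapL_eq_zero_iff hκ, forall_sum_smul_eq_zero_iff hsym hκ hα,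
    mem_parallelSections]
  simp only [hsupp]

end GaugedLaplacian

theorem stmt12_general {ν : Type*} [Fintype ν] (d : ℕ)
    (G : SimpleGraph ν) (hconn : G.Connected)
    (κ : ν → ν → ℝ)
    (hκsym : ∀ i j, κ i j = κ j i)
    (hκnn : ∀ i j, 0 ≤ κ i j)
    (hsupp : ∀ i j, 0 < κ i j ↔ G.Adj i j)
    (α : ν → ν → Matrix (Fin d) (Fin d) ℝ)
    (hortho : ∀ i j, α i j * (α i j)ᵀ = 1)
    (hdet : ∀ i j, (α i j).det = 1) :
    (∃ ξ : ν → Matrix (Fin d) (Fin d) ℝ,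
        (∀ i, ξ i * (ξ i)ᵀ = 1 ∧ (ξ i).det = 1) ∧
        ∀ i j, G.Adj i j → α i j = ξ i * (ξ j)⁻¹) ↔
      Module.finrank ℝ (LinearMap.ker (gaugedLapL d κ α)) = d := by
  obtain ⟨i₀⟩ := hconn.nonempty
  have hSO : ∀ i j, α i j ∈ specialOrthogonalGroup (Fin d) ℝ := fun i j => by
    simp [mem_specialOrthogonalGroup_iff, mem_orthogonalGroup_iff, hortho, hdet]
  calc _ ↔ ∃ ξ : ν → Matrix (Fin d) (Fin d) ℝ, (∀ i, ξ i ∈ specialOrthogonalGroup (Fin d) ℝ) ∧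
          ∀ i j, G.Adj i j → α i j = ξ i * (ξ j)⁻¹ := by
        simp only [mem_specialOrthogonalGroup_iff, mem_orthogonalGroup_iff]
    _ ↔ ∃ ξ : ν → Matrix (Fin d) (Fin d) ℝ, ξ i₀ = 1 ∧ ∀ i j, G.Adj i j → α i j * ξ j = ξ i :=
        exists_synchronization_iff_exists_frame hconn.preconnected hSO i₀
    _ ↔ Function.Surjective (evalParallelSection G α i₀) :=
        (evalParallelSection_surjective_iff i₀).symm
    _ ↔ Module.finrank ℝ (parallelSections G α) = Fintype.card (Fin d) :=
        (finrank_parallelSections_eq_card_iff hconn.preconnected i₀).symm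
    _ ↔ _ := by rw [ker_gaugedLapL G hκsym hκnn hsupp hortho, Fintype.card_fin]

/-- For a finite connected graph with `SO(d)`-voltage `α` and positive
symmetric edge weights `κ`, the voltage is synchronizable (`α_{ij} = ξ_i ξ_j⁻¹` on
edges for some `ξ_i ∈ SO(d)`) if and only if `dim ker Δ_{η,κ,α} = d`. -/
theorem stmt12 {ν : Type*} [Fintype ν] (d : ℕ)
    (G : SimpleGraph ν) (hconn : G.Connected)
    (κ : ν → ν → ℝ)
    (hκsym : ∀ i j, κ i j = κ j i)
    (hκnn : ∀ i j, 0 ≤ κ i j)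
    (hsupp : ∀ i j, 0 < κ i j ↔ G.Adj i j)
    (α : ν → ν → Matrix (Fin d) (Fin d) ℝ)
    (hortho : ∀ i j, α i j * (α i j)ᵀ = 1)
    (hdet : ∀ i j, (α i j).det = 1)
    (hinv : ∀ i j, α j i = (α i j)ᵀ) :
    (∃ ξ : ν → Matrix (Fin d) (Fin d) ℝ,
        (∀ i, ξ i * (ξ i)ᵀ = 1 ∧ (ξ i).det = 1) ∧
        ∀ i j, G.Adj i j → α i j = ξ i * (ξ j)⁻¹) ↔
      Module.finrank ℝ (LinearMap.ker (gaugedLapL d κ α)) = d :=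
  stmt12_general d G hconn κ hκsym hκnn hsupp α hortho hdet
end
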